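/- arXiv:1704.03782 — 3 statements merged into one kernel-verified Lean document; each statement's English description precedes it below -/
import Mathlib

section
/- Let λ(u) be the unique solution of Σ_i c_i² (λ − u_i)₊² = b with c_i ≥ 0 not all zero, b > 0. At a point u where λ(u) ≠ u_i for all i, λ is differentiable, and its partial derivatives are ∂λ/∂u_i = ω_i / Σ_j ω_j where ω_i := c_i²(λ(u) − u_i)₊. In particular each ∂λ/∂u_i ∈ [0,1], Σ_i ∂λ/∂u_i = 1, and ∂λ/∂u_i > 0 only if u_i < λ(u). -/
/-! Raising every `v i` by `t` raises `lam v` by `t`, and the left-hand side of the equation is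
strictly increasing in `lam v` wherever it is positive, so `lam` is 1-Lipschitz for the sup norm.
Near a point `u` with `lam u ≠ u i` the set of active indices `{i | u i < lam u}` therefore does
not change, and subtracting the equations at `v` and at `u` gives, by difference of squares,
`∑ i, ω v i * ((lam v - lam u) - (v i - u i)) = 0` with
`ω v i = c i ^ 2 * ((lam v - v i)₊ + (lam u - u i)₊) / 2`. So `lam v - lam u` is the `ω v`-weighted
mean of `v - u`, with weights continuous in `v` and equal to `w` at `v = u`; this is a Carathéodory
form of differentiability. -/

open Finset Filter Topology Asymptotics

theorem hasFDerivAt_of_eventually_sub_eq_apply_sub {E F : Type*} [NormedAddCommGroup E]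
    [NormedSpace ℝ E] [NormedAddCommGroup F] [NormedSpace ℝ F] {f : E → F}
    {Φ : E → E →L[ℝ] F} {x : E} (hΦ : ContinuousAt Φ x)
    (hf : ∀ᶠ y in 𝓝 x, f y - f x = Φ y (y - x)) : HasFDerivAt f (Φ x) x := by
  refine HasFDerivAt.of_isLittleO (IsLittleO.of_bound fun ε hε => ?_)
  filter_upwards [hf, Metric.tendsto_nhds.1 hΦ ε hε] with y hy hΦy
  calc ‖f y - f x - Φ x (y - x)‖ = ‖(Φ y - Φ x) (y - x)‖ := by
        rw [hy]; rfl
    _ ≤ ‖Φ y - Φ x‖ * ‖y - x‖ := ContinuousLinearMap.le_opNorm _ _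
    _ ≤ ε * ‖y - x‖ := by
        gcongr
        rw [← dist_eq_norm]
        exact hΦy.le

section WeightedMean

variable {ι : Type*} [Fintype ι]

noncomputable def weightedMean (ω : ι → ℝ) : (ι → ℝ) →L[ℝ] ℝ :=
  (∑ i, ω i)⁻¹ • ∑ i, ω i • ContinuousLinearMap.proj i

theorem weightedMean_apply (ω x : ι → ℝ) :
    weightedMean ω x = (∑ i, ω i * x i) / ∑ i, ω i := by
  simp [weightedMean, div_eq_inv_mul]

theorem eq_weightedMean_of_sum_mul_sub_eq_zero {ω x : ι → ℝ} {t : ℝ} (hω : ∑ i, ω i ≠ 0)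
    (h : ∑ i, ω i * (t - x i) = 0) : t = weightedMean ω x := by
  simp only [mul_sub, sum_sub_distrib, ← sum_mul] at h
  rw [weightedMean_apply, eq_div_iff hω]
  linarith

theorem ContinuousAt.weightedMean {X : Type*} [TopologicalSpace X] {ω : X → ι → ℝ} {x : X}
    (hω : ContinuousAt ω x) (h : ∑ i, ω x i ≠ 0) :
    ContinuousAt (fun y => weightedMean (ω y)) x := by
  unfold _root_.weightedMean
  have hωi : ∀ i, ContinuousAt (fun y => ω y i) x :=
    fun i => (continuous_apply i).continuousAt.comp hω
  exact ((tendsto_finsetSum _ fun i _ => hωi i).inv₀ h).smul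
    (tendsto_finsetSum _ fun i _ => (hωi i).smul continuousAt_const)

end WeightedMean

theorem div_sum_mem_Icc {ι : Type*} [Fintype ι] {w : ι → ℝ} (hw : ∀ i, 0 ≤ w i) (i : ι) :
    w i / ∑ j, w j ∈ Set.Icc 0 1 :=
  have hsum : 0 ≤ ∑ j, w j := sum_nonneg fun j _ => hw j
  ⟨div_nonneg (hw i) hsum, div_le_one_of_le₀ (single_le_sum (fun j _ => hw j) (mem_univ i)) hsum⟩

theorem ContinuousAt.eventually_pos_iff {X : Type*} [TopologicalSpace X] {f : X → ℝ} {x : X}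
    (hf : ContinuousAt f x) (hx : f x ≠ 0) : ∀ᶠ y in 𝓝 x, (0 < f y ↔ 0 < f x) := by
  rcases hx.lt_or_gt with hneg | hpos
  · filter_upwards [hf.eventually_lt continuousAt_const hneg] with y hy
    exact iff_of_false hy.not_gt hneg.not_gt
  · filter_upwards [continuousAt_const.eventually_lt hf hpos] with y hy
    exact iff_of_true hy hpos

theorem pos_of_mul_max_zero_pow_pos {a x : ℝ} {k : ℕ} (h : 0 < a * max x 0 ^ k) (hk : k ≠ 0) :
    0 < x := by
  by_contra! hx
  simp [max_eq_right hx, hk] at h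

theorem max_zero_sq_sub_max_zero_sq {x y : ℝ} (h : 0 < x ↔ 0 < y) :
    max x 0 ^ 2 - max y 0 ^ 2 = (max x 0 + max y 0) * (x - y) := by
  by_cases hy : 0 < y
  · rw [max_eq_left (h.2 hy).le, max_eq_left hy.le]
    ring
  · rw [max_eq_right (not_lt.1 (mt h.1 hy)), max_eq_right (not_lt.1 hy)]
    ring

section LocalUpdate

variable {ι : Type*} [Fintype ι]

theorem sum_sq_mul_max_sq_lt_of_lt (c : ι → ℝ) {x y : ι → ℝ} (hxy : ∀ i, x i < y i)
    (hx : 0 < ∑ i, c i ^ 2 * max (x i) 0 ^ 2) :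
    ∑ i, c i ^ 2 * max (x i) 0 ^ 2 < ∑ i, c i ^ 2 * max (y i) 0 ^ 2 := by
  obtain ⟨i, -, hi⟩ := (sum_pos_iff_of_nonneg fun i _ => by positivity).1 hx
  have hxi : 0 < x i := pos_of_mul_max_zero_pow_pos hi two_ne_zero
  refine sum_lt_sum (fun j _ => ?_) ⟨i, mem_univ i, ?_⟩
  · gcongr
    exact (hxy j).le
  · have hci : 0 < c i ^ 2 := pos_of_mul_pos_left hi (by positivity)
    rw [max_eq_left hxi.le, max_eq_left (hxi.trans (hxy i)).le]
    gcongr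
    exact hxy i

theorem sum_sq_mul_max_pos_of_sum_sq_mul_max_sq_pos (c : ι → ℝ) {x : ι → ℝ}
    (hx : 0 < ∑ i, c i ^ 2 * max (x i) 0 ^ 2) : 0 < ∑ i, c i ^ 2 * max (x i) 0 := by
  obtain ⟨i, -, hi⟩ := (sum_pos_iff_of_nonneg fun i _ => by positivity).1 hx
  refine sum_pos' (fun j _ => by positivity) ⟨i, mem_univ i, ?_⟩
  have hxi : 0 < x i := pos_of_mul_max_zero_pow_pos hi two_ne_zero
  rw [max_eq_left hxi.le] at hi ⊢
  nlinarith

def IsLocalUpdate (c : ι → ℝ) (b : ℝ) (lam : (ι → ℝ) → ℝ) : Prop :=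
  ∀ v, ∑ i, c i ^ 2 * max (lam v - v i) 0 ^ 2 = b

variable {c : ι → ℝ} {b : ℝ} {lam : (ι → ℝ) → ℝ}

namespace IsLocalUpdate

theorem le_add (hlam : IsLocalUpdate c b lam) (hb : 0 < b) {v v' : ι → ℝ} {t : ℝ}
    (h : ∀ i, v i ≤ v' i + t) : lam v ≤ lam v' + t := by
  by_contra! hlt
  have := sum_sq_mul_max_sq_lt_of_lt c (x := fun i => lam v' - v' i) (y := fun i => lam v - v i)
    (fun i => by linarith [h i]) (by rw [hlam v']; exact hb)
  rw [hlam v, hlam v'] at this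
  exact this.false

theorem lipschitzWith (hlam : IsLocalUpdate c b lam) (hb : 0 < b) : LipschitzWith 1 lam :=
  LipschitzWith.of_le_add fun v v' => hlam.le_add hb fun i => by
    have := (Real.dist_eq (v i) (v' i)).symm.trans_le (dist_le_pi_dist v v' i)
    linarith [le_abs_self (v i - v' i)]

theorem sum_weight_pos (hlam : IsLocalUpdate c b lam) (hb : 0 < b) (u : ι → ℝ) :
    0 < ∑ i, c i ^ 2 * max (lam u - u i) 0 :=
  sum_sq_mul_max_pos_of_sum_sq_mul_max_sq_pos c (x := fun i => lam u - u i)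
    (by rw [hlam u]; exact hb)

theorem hasFDerivAt (hlam : IsLocalUpdate c b lam) (hb : 0 < b) {u : ι → ℝ}
    (hreg : ∀ i, lam u ≠ u i) :
    HasFDerivAt lam (weightedMean fun i => c i ^ 2 * max (lam u - u i) 0) u := by
  have hcont : Continuous lam := (hlam.lipschitzWith hb).continuous
  set ω : (ι → ℝ) → ι → ℝ :=
    fun v i => c i ^ 2 * ((max (lam v - v i) 0 + max (lam u - u i) 0) / 2)
  have hω : Continuous ω := by fun_prop
  have hωu : ω u = fun i => c i ^ 2 * max (lam u - u i) 0 := by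
    ext i
    simp only [ω, add_self_div_two]
  have hωsum : ∑ i, ω u i ≠ 0 := by
    rw [hωu]
    exact (hlam.sum_weight_pos hb u).ne'
  rw [← hωu]
  refine hasFDerivAt_of_eventually_sub_eq_apply_sub (hω.continuousAt.weightedMean hωsum) ?_
  have hsign : ∀ᶠ v in 𝓝 u, ∀ i, (0 < lam v - v i ↔ 0 < lam u - u i) :=
    eventually_all.2 fun i => ((hcont.sub (continuous_apply i)).continuousAt).eventually_pos_iff
      (sub_ne_zero.2 (hreg i))
  have hne : ∀ᶠ v in 𝓝 u, ∑ i, ω v i ≠ 0 :=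
    (continuous_finsetSum _ fun i _ => (continuous_apply i).comp hω).continuousAt.eventually_ne
      hωsum
  filter_upwards [hsign, hne] with v hsign hne
  refine eq_weightedMean_of_sum_mul_sub_eq_zero hne ?_
  have hterm : ∀ i, ω v i * (lam v - lam u - (v - u) i) =
      (c i ^ 2 * max (lam v - v i) 0 ^ 2 - c i ^ 2 * max (lam u - u i) 0 ^ 2) / 2 := fun i => by
    have := max_zero_sq_sub_max_zero_sq (hsign i)
    simp only [ω, Pi.sub_apply]
    linear_combination (-c i ^ 2 / 2) * this
  simp only [hterm, ← sum_div, sum_sub_distrib, hlam v, hlam u, sub_self, zero_div]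

end IsLocalUpdate

end LocalUpdate

theorem fast_marching_local_update_derivative_general
    (n : ℕ) (c : Fin n → ℝ)
    (b : ℝ) (hb : 0 < b) (lam : (Fin n → ℝ) → ℝ)
    (hlam : ∀ v : Fin n → ℝ, ∑ i, (c i)^2 * (max (lam v - v i) 0)^2 = b)
    (u : Fin n → ℝ) (hreg : ∀ i, lam u ≠ u i)
    (w : Fin n → ℝ) (hw : ∀ i, w i = (c i)^2 * max (lam u - u i) 0) :
    (∃ L : (Fin n → ℝ) →L[ℝ] ℝ,
        (∀ du : Fin n → ℝ, L du = (∑ i, w i * du i) / (∑ j, w j)) ∧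
        HasFDerivAt lam L u) ∧
    (∀ i, w i / (∑ j, w j) ∈ Set.Icc (0:ℝ) 1) ∧
    (∑ i, w i / (∑ j, w j)) = 1 ∧
    (∀ i, 0 < w i / (∑ j, w j) → u i < lam u) := by
  replace hlam : IsLocalUpdate c b lam := hlam
  obtain rfl : w = fun i => c i ^ 2 * max (lam u - u i) 0 := funext hw
  have hsum := hlam.sum_weight_pos hb u
  refine ⟨⟨_, weightedMean_apply _, hlam.hasFDerivAt hb hreg⟩,
    div_sum_mem_Icc fun i => by positivity, by rw [← sum_div, div_self hsum.ne'], fun i hi => ?_⟩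
  have hwi := (div_pos_iff_of_pos_right hsum).1 hi
  exact sub_pos.1 (pos_of_mul_max_zero_pow_pos (k := 1) (by simpa using hwi) one_ne_zero)

/-- Differentiability of the fast-marching local update `lam` (the implicit
solution of `Σ_i (c i)^2 (lam v - v i)₊² = b`) at a point `u` where
`lam u ≠ u i` for all `i`: the derivative sends `du` to
`(Σ_i ω_i * du_i) / (Σ_j ω_j)` with `ω_i = (c i)^2 (lam u - u i)₊`, each
partial derivative `ω_i / Σ_j ω_j` lies in `[0,1]`, they sum to `1`, and they
are positive only on indices with `u i < lam u`. -/
theorem fast_marching_local_update_derivative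
    (n : ℕ) (c : Fin n → ℝ) (hc : ∀ i, 0 ≤ c i) (hne : ∃ i, c i ≠ 0)
    (b : ℝ) (hb : 0 < b) (lam : (Fin n → ℝ) → ℝ)
    (hlam : ∀ v : Fin n → ℝ, ∑ i, (c i)^2 * (max (lam v - v i) 0)^2 = b)
    (u : Fin n → ℝ) (hreg : ∀ i, lam u ≠ u i)
    (w : Fin n → ℝ) (hw : ∀ i, w i = (c i)^2 * max (lam u - u i) 0) :
    (∃ L : (Fin n → ℝ) →L[ℝ] ℝ,
        (∀ du : Fin n → ℝ, L du = (∑ i, w i * du i) / (∑ j, w j)) ∧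
        HasFDerivAt lam L u) ∧
    (∀ i, w i / (∑ j, w j) ∈ Set.Icc (0:ℝ) 1) ∧
    (∑ i, w i / (∑ j, w j)) = 1 ∧
    (∀ i, 0 < w i / (∑ j, w j) → u i < lam u) :=
  fast_marching_local_update_derivative_general n c b hb lam hlam u hreg w hw
end

section
/- Fix n ∈ ℝ² with ‖n‖ = 1 and ρ > 0. Define the Reeds–Shepp Lagrangian on (ṗ, ṅ) ∈ ℝ² × ℝ by L(ṗ, ṅ) = ½(‖ṗ‖² + ρ² ṅ²) if ṗ = t·n for some t ≥ 0, and L(ṗ, ṅ) = +∞ otherwise. Then its Legendre–Fenchel transform H(p̂, n̂) = sup_{ṗ, ṅ} (⟨p̂, ṗ⟩ + n̂·ṅ − L(ṗ, ṅ)) equals ½(max(⟨p̂, n⟩, 0)² + n̂²/ρ²). -/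
open scoped RealInnerProductSpace

/-- Legendre–Fenchel transform of the Reeds–Shepp Lagrangian: with unit vector
`n` and `ρ > 0`, the Lagrangian equals `½(‖ṗ‖² + ρ²ṅ²)` on admissible
velocities `ṗ = t • n`, `t ≥ 0`, and `+∞` elsewhere; its convex conjugate at
`(p̂, n̂)` is the supremum over admissible velocities of
`⟪p̂, ṗ⟫ + n̂ ṅ − L(ṗ, ṅ)`, and it equals `½(max ⟪p̂,n⟫ 0 ^ 2 + n̂²/ρ²)`. -/
theorem reeds_shepp_hamiltonian
    (n : EuclideanSpace ℝ (Fin 2)) (hn : ‖n‖ = 1) (ρ : ℝ) (hρ : 0 < ρ)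
    (phat : EuclideanSpace ℝ (Fin 2)) (nhat : ℝ) :
    IsLUB {y : ℝ | ∃ t : ℝ, 0 ≤ t ∧ ∃ ndot : ℝ,
        y = ⟪phat, t • n⟫ + nhat * ndot - (1/2) * (‖t • n‖^2 + ρ^2 * ndot^2)}
      ((1/2) * ((max ⟪phat, n⟫ 0)^2 + nhat^2 / ρ^2)) := by
  have key : ∀ t ndot : ℝ,
      ⟪phat, t • n⟫ + nhat * ndot - (1/2) * (‖t • n‖^2 + ρ^2 * ndot^2)
        = t * ⟪phat, n⟫ + nhat * ndot - (1/2) * (t^2 + ρ^2 * ndot^2) := by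
    intro t ndot
    rw [real_inner_smul_right, norm_smul, hn]
    simp [mul_pow, sq_abs]
  have hρ2 : (0:ℝ) < ρ^2 := by positivity
  constructor
  · rintro y ⟨t, ht, ndot, rfl⟩
    rw [key]
    have h1 : t * ⟪phat, n⟫ ≤ t * max ⟪phat, n⟫ 0 :=
      mul_le_mul_of_nonneg_left (le_max_left _ _) ht
    have h2 : nhat * ndot - (1/2) * (ρ^2 * ndot^2) ≤ (1/2) * (nhat^2 / ρ^2) := by
      have hne : ρ ≠ 0 := ne_of_gt hρ
      have heq : (1/2) * (nhat^2 / ρ^2) - (nhat * ndot - (1/2) * (ρ^2 * ndot^2))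
          = (ρ * ndot - nhat / ρ)^2 / 2 := by
        field_simp
        ring
      nlinarith [sq_nonneg (ρ * ndot - nhat / ρ)]
    nlinarith [sq_nonneg (t - max ⟪phat, n⟫ 0)]
  · intro b hb
    refine hb ⟨max ⟪phat, n⟫ 0, le_max_right _ _, nhat / ρ^2, ?_⟩
    rw [key]
    rcases max_cases ⟪phat, n⟫ 0 with ⟨hm, _⟩ | ⟨hm, _⟩ <;> rw [hm] <;> field_simp <;> ring
end

section
/- Fix n ∈ ℝ² with ‖n‖ = 1 and ρ > 0. Define the Dubins Lagrangian on (ṗ, ṅ) ∈ ℝ² × ℝ by L(ṗ, ṅ) = ½t² if ṗ = t·n with t ≥ 0 and |ṅ| ≤ t/ρ, and L(ṗ, ṅ) = +∞ otherwise. Then its Legendre–Fenchel transform equals H(p̂, n̂) = ½ max(0, ⟨p̂, n⟩ + |n̂|/ρ)². -/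
open scoped RealInnerProductSpace

/-- Legendre–Fenchel transform of the Dubins Lagrangian: with unit vector `n`
and `ρ > 0`, the Lagrangian equals `½t²` on admissible velocities `ṗ = t • n`,
`t ≥ 0`, `|ṅ| ≤ t/ρ`, and `+∞` elsewhere; its convex conjugate at `(p̂, n̂)`
is the supremum over admissible velocities of `⟪p̂, ṗ⟫ + n̂ ṅ − ½t²`, and it
equals `½ (max 0 (⟪p̂,n⟫ + |n̂|/ρ))²`. -/
theorem dubins_hamiltonian
    (n : EuclideanSpace ℝ (Fin 2)) (hn : ‖n‖ = 1) (ρ : ℝ) (hρ : 0 < ρ)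
    (phat : EuclideanSpace ℝ (Fin 2)) (nhat : ℝ) :
    IsLUB {y : ℝ | ∃ t : ℝ, 0 ≤ t ∧ ∃ ndot : ℝ, |ndot| ≤ t / ρ ∧
        y = ⟪phat, t • n⟫ + nhat * ndot - (1/2) * t^2}
      ((1/2) * (max 0 (⟪phat, n⟫ + |nhat| / ρ))^2) := by
  set c : ℝ := ⟪phat, n⟫ with hc
  set a : ℝ := c + |nhat| / ρ with ha
  set m : ℝ := max 0 a with hm
  have hm0 : 0 ≤ m := le_max_left _ _
  have ham : a ≤ m := le_max_right _ _
  have hm' : m = max 0 a := hm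
  clear_value m a c
  constructor
  · rintro y ⟨t, ht, ndot, hnd, rfl⟩
    have hinner : ⟪phat, t • n⟫ = t * c := by rw [hc]; exact real_inner_smul_right _ _ _
    rw [hinner]
    have h1 : nhat * ndot ≤ |nhat| * (t / ρ) := by
      calc nhat * ndot ≤ |nhat * ndot| := le_abs_self _
        _ = |nhat| * |ndot| := abs_mul _ _
        _ ≤ |nhat| * (t / ρ) := by
            exact mul_le_mul_of_nonneg_left hnd (abs_nonneg _)
    have h2 : t * c + |nhat| * (t / ρ) = t * a := by
      rw [ha]; ring
    have h3 : t * a ≤ t * m := mul_le_mul_of_nonneg_left ham ht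
    have h4 : t * m ≤ 1/2 * t^2 + 1/2 * m^2 := by nlinarith [sq_nonneg (t - m)]
    linarith
  · intro b hb
    have hmem : (1/2) * m ^ 2 ∈ {y : ℝ | ∃ t : ℝ, 0 ≤ t ∧ ∃ ndot : ℝ, |ndot| ≤ t / ρ ∧
        y = ⟪phat, t • n⟫ + nhat * ndot - (1/2) * t^2} := by
      refine ⟨m, hm0, (if 0 ≤ nhat then m / ρ else -(m / ρ)), ?_, ?_⟩
      · split <;> simp [abs_of_nonneg, abs_of_nonpos, div_nonneg hm0 hρ.le, le_refl,
          abs_of_nonneg (div_nonneg hm0 hρ.le)]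
      · have hinner : ⟪phat, m • n⟫ = m * c := by rw [hc]; exact real_inner_smul_right _ _ _
        rw [hinner]
        have hnn : nhat * (if 0 ≤ nhat then m / ρ else -(m / ρ)) = |nhat| * (m / ρ) := by
          split_ifs with h
          · rw [abs_of_nonneg h]
          · rw [abs_of_neg (not_le.mp h)]; ring
        rw [hnn]
        rcases le_or_gt a 0 with h | h
        · have hz : m = 0 := hm' ▸ max_eq_left h
          rw [hz]; ring
        · have hma : m = a := hm' ▸ max_eq_right h.le
          rw [hma, ha]; field_simp; ring
    exact hb hmem
end
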